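/- Let F be a finite chordal polynomial set in K[x_1,...,x_n] such that x_1 < ... < x_n is a perfect elimination ordering of G(F). Then every pair (P, Q) of finite polynomial sets obtained from the pair (F, ∅) by finitely many regular-decomposition steps satisfies G(P) ⊆ G(F) and G(Q) ⊆ G(F). -/

import Mathlib

/-!
The support of every polynomial that ever occurs stays a clique of `G(Fs)`, which is the
same as `G(P) ⊆ G(Fs)` and `G(Q) ⊆ G(Fs)`. A step only introduces polynomials supported in
the support of one old polynomial, or in the union of the supports of two old polynomials
with the same leading variable `x_k`; in the latter case the union is again a clique because
two variables below `x_k` that are both adjacent to `x_k` are adjacent, by the perfect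
elimination property.
-/

open MvPolynomial

variable {K : Type*} [Field K] {n : ℕ}

/-- The set of variables effectively appearing in a polynomial. -/
def psupp (F : MvPolynomial (Fin n) K) : Set (Fin n) := ↑F.vars

/-- The set of variables appearing in a set of polynomials. -/
def ssupp (P : Set (MvPolynomial (Fin n) K)) : Set (Fin n) :=
  ⋃ F ∈ P, psupp F

/-- Adjacency in the associated graph `G(P)`: `p ≠ q` and some polynomial of `P`
contains both variables. -/
def adjG (P : Set (MvPolynomial (Fin n) K)) (p q : Fin n) : Prop :=
  p ≠ q ∧ ∃ F ∈ P, p ∈ psupp F ∧ q ∈ psupp F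

/-- `G(P) ⊆ G(Q)`: every edge of `G(P)` is an edge of `G(Q)`. -/
def subG (P Q : Set (MvPolynomial (Fin n) K)) : Prop :=
  ∀ p q, adjG P p q → adjG Q p q

/-- The natural ordering `x_1 < ... < x_n` of the variables is a perfect elimination
ordering of `G(P)`; in particular `G(P)` is chordal. -/
def isPEO (P : Set (MvPolynomial (Fin n) K)) : Prop :=
  ∀ p q k : Fin n, p < k → q < k → p ≠ q → adjG P p k → adjG P q k → adjG P p q

/-- `F` is nonconstant with leading variable `x_k`. -/
def hasLv (F : MvPolynomial (Fin n) K) (k : Fin n) : Prop :=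
  k ∈ psupp F ∧ ∀ j ∈ psupp F, j ≤ k

/-- `P^(k)`: the polynomials of `P` with leading variable `x_k`. -/
def levelSet (P : Set (MvPolynomial (Fin n) K)) (k : Fin n) :
    Set (MvPolynomial (Fin n) K) :=
  {F | F ∈ P ∧ hasLv F k}

/-- A regular-decomposition step: transform a pair `(P, Q)` of polynomial sets, for
some index `k`, by one of the following branches.
(Right branch) choose `T ∈ P^(k)` and polynomials `I, R'` supported in `supp T`,
and pass to `((P \ {T}) ∪ {I, R'}, Q)`.
(Subresultant branch) choose distinct `T₁, T₂ ∈ P^(k)`, polynomials `H_2, ..., H_r`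
with `supp (H m) ⊆ supp T₁ ∪ supp T₂`, polynomials `I_2, ..., I_r` with
`supp (I m) ⊆ supp (H m)`, a polynomial `J` with `supp J ⊆ supp T₂`, and
`2 ≤ i ≤ r`, and pass to
`((P \ {T₁, T₂}) ∪ {H i, I_{i+1}, ..., I_r}, Q ∪ {J, I i})`.
(Mixed branch) choose `T₁ ∈ Q^(k)` and `T₂ ∈ P^(k)`, polynomials `H_2, ..., H_r`
and `S_2, ..., S_r` with supports in `supp T₁ ∪ supp T₂`, polynomials
`I_2, ..., I_r` with `supp (I m) ⊆ supp (H m)`, and `2 ≤ i ≤ r`, and pass to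
`((P \ {T₂}) ∪ {S i, I_{i+1}, ..., I_r}, Q ∪ {I i})`, or for `i = r` also possibly
to `((P \ {T₂}) ∪ {S r}, (Q \ {T₁}) ∪ {I r})`.
(Inequation branch) choose `Q₀ ∈ Q^(k)` and polynomials `I, R` supported in
`supp Q₀`, and pass to `(P ∪ {I}, (Q \ {Q₀}) ∪ {R})` or to `(P, Q ∪ {I})`. -/
def RegStep (PQ PQ' :
    Set (MvPolynomial (Fin n) K) × Set (MvPolynomial (Fin n) K)) : Prop :=
  ∃ k : Fin n,
    (∃ T ∈ levelSet PQ.1 k, ∃ I R' : MvPolynomial (Fin n) K,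
        psupp I ⊆ psupp T ∧ psupp R' ⊆ psupp T ∧
        PQ'.1 = (PQ.1 \ {T}) ∪ {I, R'} ∧ PQ'.2 = PQ.2) ∨
    (∃ T₁ T₂ : MvPolynomial (Fin n) K, T₁ ≠ T₂ ∧
        T₁ ∈ levelSet PQ.1 k ∧ T₂ ∈ levelSet PQ.1 k ∧
      ∃ (r : ℕ) (H I : ℕ → MvPolynomial (Fin n) K) (J : MvPolynomial (Fin n) K)
          (i : ℕ), 2 ≤ i ∧ i ≤ r ∧
        (∀ m, 2 ≤ m → m ≤ r → psupp (H m) ⊆ psupp T₁ ∪ psupp T₂) ∧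
        (∀ m, 2 ≤ m → m ≤ r → psupp (I m) ⊆ psupp (H m)) ∧
        psupp J ⊆ psupp T₂ ∧
        PQ'.1 = (PQ.1 \ {T₁, T₂}) ∪ {H i} ∪ (I '' {m | i < m ∧ m ≤ r}) ∧
        PQ'.2 = PQ.2 ∪ {J, I i}) ∨
    (∃ T₁ T₂ : MvPolynomial (Fin n) K,
        T₁ ∈ levelSet PQ.2 k ∧ T₂ ∈ levelSet PQ.1 k ∧
      ∃ (r : ℕ) (H S I : ℕ → MvPolynomial (Fin n) K) (i : ℕ), 2 ≤ i ∧ i ≤ r ∧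
        (∀ m, 2 ≤ m → m ≤ r → psupp (H m) ⊆ psupp T₁ ∪ psupp T₂) ∧
        (∀ m, 2 ≤ m → m ≤ r → psupp (S m) ⊆ psupp T₁ ∪ psupp T₂) ∧
        (∀ m, 2 ≤ m → m ≤ r → psupp (I m) ⊆ psupp (H m)) ∧
        PQ'.1 = (PQ.1 \ {T₂}) ∪ {S i} ∪ (I '' {m | i < m ∧ m ≤ r}) ∧
        (PQ'.2 = PQ.2 ∪ {I i} ∨ (i = r ∧ PQ'.2 = (PQ.2 \ {T₁}) ∪ {I i}))) ∨
    (∃ Q₀ ∈ levelSet PQ.2 k, ∃ I R : MvPolynomial (Fin n) K,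
        psupp I ⊆ psupp Q₀ ∧ psupp R ⊆ psupp Q₀ ∧
        ((PQ'.1 = PQ.1 ∪ {I} ∧ PQ'.2 = (PQ.2 \ {Q₀}) ∪ {R}) ∨
         (PQ'.1 = PQ.1 ∧ PQ'.2 = PQ.2 ∪ {I})))

def assocGraph (P : Set (MvPolynomial (Fin n) K)) : SimpleGraph (Fin n) where
  Adj := adjG P
  symm := ⟨fun _ _ ⟨hpq, F, hF, hp, hq⟩ => ⟨hpq.symm, F, hF, hq, hp⟩⟩
  loopless := ⟨fun _ h => h.1 rfl⟩

theorem subG_iff_forall_isClique {P Q : Set (MvPolynomial (Fin n) K)} :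
    subG P Q ↔ ∀ F ∈ P, (assocGraph Q).IsClique (psupp F) :=
  ⟨fun h F hF _ hp _ hq hpq => h _ _ ⟨hpq, F, hF, hp, hq⟩,
    fun h _ _ ⟨hpq, F, hF, hp, hq⟩ => (h F hF hp hq hpq : adjG Q _ _)⟩

theorem subG_refl (P : Set (MvPolynomial (Fin n) K)) : subG P P :=
  fun _ _ h => h

theorem subG_empty (P : Set (MvPolynomial (Fin n) K)) : subG ∅ P :=
  fun _ _ ⟨_, _, hF, _⟩ => hF.elim

theorem SimpleGraph.IsClique.union_of_isGreatest {α : Type*} [LinearOrder α]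
    {G : SimpleGraph α} {S T : Set α} {k : α} (cS : G.IsClique S) (cT : G.IsClique T)
    (hS : IsGreatest S k) (hT : IsGreatest T k)
    (hpeo : ∀ p q k, p < k → q < k → p ≠ q → G.Adj p k → G.Adj q k → G.Adj p q) :
    G.IsClique (S ∪ T) := by
  refine Set.pairwise_union.mpr ⟨cS, cT, fun p hp q hq hpq => ?_⟩
  suffices G.Adj p q from ⟨this, this.symm⟩
  rcases eq_or_ne p k with rfl | hpk
  · exact cT hT.1 hq hpq
  rcases eq_or_ne q k with rfl | hqk
  · exact cS hp hS.1 hpq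
  exact hpeo p q k ((hS.2 hp).lt_of_ne hpk) ((hT.2 hq).lt_of_ne hqk) hpq
    (cS hp hS.1 hpk) (cT hq hT.1 hqk)

theorem RegStep.subG_of_subG {Fs : Set (MvPolynomial (Fin n) K)} (hpeo : isPEO Fs)
    {PQ PQ' : Set (MvPolynomial (Fin n) K) × Set (MvPolynomial (Fin n) K)}
    (hstep : RegStep PQ PQ') (h : subG PQ.1 Fs ∧ subG PQ.2 Fs) :
    subG PQ'.1 Fs ∧ subG PQ'.2 Fs := by
  obtain ⟨P, Q⟩ := PQ
  obtain ⟨P', Q'⟩ := PQ'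
  simp only [subG_iff_forall_isClique] at h ⊢
  obtain ⟨hP, hQ⟩ := h
  obtain ⟨k, hbr⟩ := hstep
  dsimp only at hbr
  rcases hbr with ⟨T, hT, I, R', hI, hR', rfl, rfl⟩ |
    ⟨T₁, T₂, -, hT₁, hT₂, r, H, I, J, i, hi2, hir, hH, hIH, hJ, rfl, rfl⟩ |
    ⟨T₁, T₂, hT₁, hT₂, r, H, S, I, i, hi2, hir, hH, hS, hIH, rfl, hQ'⟩ |
    ⟨Q₀, hQ₀, I, R, hI, hR, ⟨rfl, rfl⟩ | ⟨rfl, rfl⟩⟩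
  all_goals
    simp only [Set.mem_union, Set.mem_sdiff, Set.mem_insert_iff, Set.mem_singleton_iff,
      or_imp, forall_and, forall_eq, Set.forall_mem_image]
  · exact ⟨⟨fun F hF => hP F hF.1, (hP T hT.1).subset hI, (hP T hT.1).subset hR'⟩, hQ⟩
  · have cU := (hP T₁ hT₁.1).union_of_isGreatest (hP T₂ hT₂.1) hT₁.2 hT₂.2 hpeo
    have cI : ∀ m, 2 ≤ m → m ≤ r → (assocGraph Fs).IsClique (psupp (I m)) :=
      fun m h2 hr => cU.subset ((hIH m h2 hr).trans (hH m h2 hr))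
    exact ⟨⟨⟨fun F hF => hP F hF.1, cU.subset (hH i hi2 hir)⟩,
      fun m hm => cI m (hi2.trans hm.1.le) hm.2⟩, hQ, (hP T₂ hT₂.1).subset hJ, cI i hi2 hir⟩
  · have cU := (hQ T₁ hT₁.1).union_of_isGreatest (hP T₂ hT₂.1) hT₁.2 hT₂.2 hpeo
    have cI : ∀ m, 2 ≤ m → m ≤ r → (assocGraph Fs).IsClique (psupp (I m)) :=
      fun m h2 hr => cU.subset ((hIH m h2 hr).trans (hH m h2 hr))
    refine ⟨⟨⟨fun F hF => hP F hF.1, cU.subset (hS i hi2 hir)⟩,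
      fun m hm => cI m (hi2.trans hm.1.le) hm.2⟩, ?_⟩
    rcases hQ' with rfl | ⟨-, rfl⟩ <;>
      simp only [Set.mem_union, Set.mem_sdiff, Set.mem_singleton_iff, or_imp, forall_and,
        forall_eq]
    exacts [⟨hQ, cI i hi2 hir⟩, ⟨fun F hF => hQ F hF.1, cI i hi2 hir⟩]
  · exact ⟨⟨hP, (hQ Q₀ hQ₀.1).subset hI⟩, fun F hF => hQ F hF.1, (hQ Q₀ hQ₀.1).subset hR⟩
  · exact ⟨hP, hQ, (hQ Q₀ hQ₀.1).subset hI⟩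

theorem statement14_general {K : Type*} [Field K] {n : ℕ}
    (Fs : Set (MvPolynomial (Fin n) K)) (hpeo : isPEO Fs)
    (P Q : Set (MvPolynomial (Fin n) K))
    (h : Relation.ReflTransGen RegStep (Fs, ∅) (P, Q)) :
    subG P Fs ∧ subG Q Fs := by
  suffices ∀ PQ, Relation.ReflTransGen RegStep (Fs, ∅) PQ → subG PQ.1 Fs ∧ subG PQ.2 Fs from
    this _ h
  intro PQ hPQ
  induction hPQ with
  | refl => exact ⟨subG_refl Fs, subG_empty Fs⟩
  | tail _ hstep ih => exact hstep.subG_of_subG hpeo ih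

/-- let `Fs` be a finite chordal polynomial set whose natural variable
ordering is a perfect elimination ordering.  Then every pair `(P, Q)` obtained from
`(Fs, ∅)` by finitely many regular-decomposition steps satisfies `G(P) ⊆ G(Fs)`
and `G(Q) ⊆ G(Fs)`. -/
theorem statement14 {K : Type*} [Field K] {n : ℕ}
    (Fs : Set (MvPolynomial (Fin n) K)) (hFfin : Fs.Finite) (hpeo : isPEO Fs)
    (P Q : Set (MvPolynomial (Fin n) K))
    (h : Relation.ReflTransGen RegStep (Fs, ∅) (P, Q)) :
    subG P Fs ∧ subG Q Fs :=
  statement14_general Fs hpeo P Q h
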